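/- Let u : [0,1] → ℝ be continuously differentiable with u(0) = u(1) = 0. Then ∫_0^1 u'(x)² dx ≥ π²·∫_0^1 u(x)² dx. -/

import Mathlib

/-!
Since `sin (π x)` is a positive eigenfunction of `-d²/dx²` on `(0, 1)` with eigenvalue `π²`, its
logarithmic derivative `π cot (π x)` yields the weight `w = π u² cot (π x)`, for which
`u'² - π² u² - w' = (u' - π u cot (π x))² ≥ 0` on `(0, 1)`. Integrating over `[t, 1 - t]` gives
`∫ (u'² - π² u²) ≥ w (1 - t) - w t`, and `w (t), w (1 - t) → 0` as `t → 0⁺` because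
`u² / sin (π x) → 0` at a zero of `u` where `sin (π x)` has a simple zero.
-/

open Real Set Filter Topology MeasureTheory

noncomputable def cotWeight (u : ℝ → ℝ) (x : ℝ) : ℝ := π * u x ^ 2 * cot (π * x)

lemma hasDerivAt_cot_pi_mul {x : ℝ} (hx : sin (π * x) ≠ 0) :
    HasDerivAt (fun y => cot (π * y)) (-π / sin (π * x) ^ 2) x := by
  have hlin : HasDerivAt (fun y => π * y) π x := by simpa using (hasDerivAt_id x).const_mul π
  have hcot : (fun y => cot (π * y)) = fun y => cos (π * y) / sin (π * y) :=
    funext fun y => cot_eq_cos_div_sin _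
  rw [hcot]
  refine (hlin.cos.fun_div hlin.sin hx).congr_deriv ?_
  field_simp
  linear_combination -sin_sq_add_cos_sq (π * x)

lemma hasDerivAt_cotWeight {u : ℝ → ℝ} {u' x : ℝ} (hu : HasDerivAt u u' x)
    (hx : sin (π * x) ≠ 0) :
    HasDerivAt (cotWeight u)
      (2 * π * u x * u' * cot (π * x) - π ^ 2 * u x ^ 2 / sin (π * x) ^ 2) x := by
  refine (((hu.pow 2).const_mul π).mul (hasDerivAt_cot_pi_mul hx)).congr_deriv ?_
  simp only [Pi.pow_apply, Nat.cast_ofNat]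
  ring

lemma mul_cot_sub_div_sin_sq_le (k a b θ : ℝ) (hθ : sin θ ≠ 0) :
    2 * k * a * b * cot θ - k ^ 2 * a ^ 2 / sin θ ^ 2 ≤ b ^ 2 - k ^ 2 * a ^ 2 := by
  have hcot : 1 / sin θ ^ 2 = 1 + cot θ ^ 2 := by
    rw [cot_eq_cos_div_sin]
    field_simp
    linear_combination -sin_sq_add_cos_sq θ
  have hgap : b ^ 2 - k ^ 2 * a ^ 2 - (2 * k * a * b * cot θ - k ^ 2 * a ^ 2 / sin θ ^ 2) =
      (b - k * a * cot θ) ^ 2 := by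
    rw [div_eq_mul_one_div, hcot]
    ring
  linarith [sq_nonneg (b - k * a * cot θ)]

lemma sin_pi_mul_pos {x : ℝ} (hx : x ∈ Ioo (0:ℝ) 1) : 0 < sin (π * x) :=
  sin_pos_of_pos_of_lt_pi (by nlinarith [pi_pos, hx.1]) (by nlinarith [pi_pos, hx.2])

lemma cotWeight_sub_le_integral {u u' : ℝ → ℝ} {a b : ℝ} (ha : 0 < a) (hab : a ≤ b)
    (hb : b < 1) (hu : ∀ x ∈ Icc a b, HasDerivAt u (u' x) x) (hu' : ContinuousOn u' (Icc a b)) :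
    cotWeight u b - cotWeight u a ≤ ∫ x in a..b, (u' x ^ 2 - π ^ 2 * u x ^ 2) := by
  have hsin : ∀ x ∈ Icc a b, sin (π * x) ≠ 0 := fun x hx =>
    (sin_pi_mul_pos ⟨ha.trans_le hx.1, hx.2.trans_lt hb⟩).ne'
  have hw : ∀ x ∈ Icc a b, HasDerivAt (cotWeight u) _ x := fun x hx =>
    hasDerivAt_cotWeight (hu x hx) (hsin x hx)
  have hcu : ContinuousOn u (Icc a b) := fun x hx => (hu x hx).continuousAt.continuousWithinAt
  exact intervalIntegral.sub_le_integral_of_hasDeriv_right_of_le hab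
    (fun x hx => (hw x hx).continuousAt.continuousWithinAt)
    (fun x hx => (hw x (Ioo_subset_Icc_self hx)).hasDerivWithinAt)
    ((hu'.pow 2).sub (hcu.pow 2 |>.const_smul (π ^ 2))).integrableOn_Icc
    (fun x hx => mul_cot_sub_div_sin_sq_le _ _ _ _ (hsin x (Ioo_subset_Icc_self hx)))

lemma tendsto_sq_div_nhdsNE {f g : ℝ → ℝ} {f' g' x : ℝ} (hf : HasDerivAt f f' x)
    (hg : HasDerivAt g g' x) (hfx : f x = 0) (hgx : g x = 0) (hg' : g' ≠ 0) :
    Tendsto (fun y => f y ^ 2 / g y) (𝓝[≠] x) (𝓝 0) := by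
  have hlim : Tendsto (fun y => slope f x y ^ 2 * (y - x) / slope g x y) (𝓝[≠] x)
      (𝓝 (f' ^ 2 * (x - x) / g')) :=
    ((hf.tendsto_slope.pow 2).mul
      ((tendsto_id.sub_const x).mono_left nhdsWithin_le_nhds)).div hg.tendsto_slope hg'
  rw [sub_self, mul_zero, zero_div] at hlim
  refine hlim.congr' ?_
  filter_upwards [self_mem_nhdsWithin] with y hy
  have hyx : y - x ≠ 0 := sub_ne_zero.mpr hy
  simp only [slope_def_field, hfx, hgx, sub_zero]
  field_simp

lemma tendsto_cotWeight {u : ℝ → ℝ} {u' x : ℝ} (hu : HasDerivAt u u' x) (hux : u x = 0)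
    (hx : sin (π * x) = 0) : Tendsto (cotWeight u) (𝓝[≠] x) (𝓝 0) := by
  have hlin : HasDerivAt (fun y => π * y) π x := by simpa using (hasDerivAt_id x).const_mul π
  have hcos : cos (π * x) ≠ 0 := by
    intro h
    simpa [hx, h] using sin_sq_add_cos_sq (π * x)
  have hquot := tendsto_sq_div_nhdsNE hu hlin.sin hux hx (mul_ne_zero hcos pi_ne_zero)
  have hcos_lim : Tendsto (fun y => cos (π * y)) (𝓝[≠] x) (𝓝 (cos (π * x))) :=
    (by fun_prop : Continuous fun y => cos (π * y)).continuousWithinAt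
  have hlim := (hquot.const_mul π).mul hcos_lim
  rw [mul_zero, zero_mul] at hlim
  refine hlim.congr fun y => ?_
  rw [cotWeight, cot_eq_cos_div_sin]
  ring

lemma tendsto_integral_add_sub_nhdsGT {F : ℝ → ℝ} {a b : ℝ} (hab : a < b)
    (hF : IntegrableOn F (Icc a b)) :
    Tendsto (fun t => ∫ x in (a + t)..(b - t), F x) (𝓝[>] 0) (𝓝 (∫ x in a..b, F x)) := by
  set G := fun y => ∫ x in a..y, F x
  have hG : ContinuousOn G (Icc a b) := by
    rw [← uIcc_of_le hab.le] at hF ⊢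
    exact intervalIntegral.continuousOn_primitive_interval hF
  have hmem : ∀ᶠ t in 𝓝[>] (0:ℝ), a + t ∈ Icc a b ∧ b - t ∈ Icc a b := by
    filter_upwards [Ioo_mem_nhdsGT (sub_pos.2 hab)] with t ht
    exact ⟨⟨by linarith [ht.1], by linarith [ht.2]⟩, ⟨by linarith [ht.2], by linarith [ht.1]⟩⟩
  have hleft : Tendsto (fun t => G (a + t)) (𝓝[>] 0) (𝓝 (G a)) :=
    (hG a (left_mem_Icc.2 hab.le)).tendsto.comp <| tendsto_nhdsWithin_iff.2
      ⟨((continuous_const_add a).tendsto' 0 a (add_zero a)).mono_left nhdsWithin_le_nhds,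
        hmem.mono fun _ h => h.1⟩
  have hright : Tendsto (fun t => G (b - t)) (𝓝[>] 0) (𝓝 (G b)) :=
    (hG b (right_mem_Icc.2 hab.le)).tendsto.comp <| tendsto_nhdsWithin_iff.2
      ⟨((continuous_sub_left b).tendsto' 0 b (sub_zero b)).mono_left nhdsWithin_le_nhds,
        hmem.mono fun _ h => h.2⟩
  have hlim := hright.sub hleft
  simp only [G, intervalIntegral.integral_same, sub_zero] at hlim
  refine hlim.congr' ?_
  filter_upwards [hmem] with t ht
  have hint : ∀ y ∈ Icc a b, IntervalIntegrable F volume a y := fun y hy =>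
    (hF.mono_set (uIcc_subset_Icc (left_mem_Icc.2 hab.le) hy)).intervalIntegrable
  exact intervalIntegral.integral_interval_sub_left (hint _ ht.2) (hint _ ht.1)

lemma integral_sq_deriv_sub_sq_nonneg {u u' : ℝ → ℝ}
    (hu : ∀ x ∈ Icc (0:ℝ) 1, HasDerivAt u (u' x) x) (hu' : ContinuousOn u' (Icc 0 1))
    (h0 : u 0 = 0) (h1 : u 1 = 0) : 0 ≤ ∫ x in (0:ℝ)..1, (u' x ^ 2 - π ^ 2 * u x ^ 2) := by
  have hcu : ContinuousOn u (Icc 0 1) := fun x hx => (hu x hx).continuousAt.continuousWithinAt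
  have hint := tendsto_integral_add_sub_nhdsGT zero_lt_one
    ((hu'.pow 2).sub (hcu.pow 2 |>.const_smul (π ^ 2))).integrableOn_Icc
  simp only [zero_add] at hint
  have hw0 : Tendsto (fun t => cotWeight u t) (𝓝[>] 0) (𝓝 0) :=
    (tendsto_cotWeight (hu 0 (left_mem_Icc.2 zero_le_one)) h0 (by simp)).mono_left
      (nhdsGT_le_nhdsNE 0)
  have hw1 : Tendsto (fun t => cotWeight u (1 - t)) (𝓝[>] 0) (𝓝 0) := by
    refine (tendsto_cotWeight (hu 1 (right_mem_Icc.2 zero_le_one)) h1 (by simp)).comp ?_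
    refine tendsto_nhdsWithin_iff.2
      ⟨((continuous_sub_left 1).tendsto' 0 1 (sub_zero 1)).mono_left nhdsWithin_le_nhds, ?_⟩
    filter_upwards [self_mem_nhdsWithin] with t ht
    simpa using ht.ne'
  have hw := hw1.sub hw0
  rw [sub_zero] at hw
  refine le_of_tendsto_of_tendsto hw hint ?_
  filter_upwards [Ioo_mem_nhdsGT (show (0:ℝ) < 1 / 2 by norm_num)] with t ht
  exact cotWeight_sub_le_integral ht.1 (by linarith [ht.2]) (by linarith [ht.1])
    (fun x hx => hu x ⟨by linarith [hx.1, ht.1], by linarith [hx.2, ht.1]⟩)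
    (hu'.mono (Icc_subset_Icc ht.1.le (by linarith [ht.1])))

theorem stmt7 (u : ℝ → ℝ) (hu : ContDiff ℝ 1 u) (h0 : u 0 = 0) (h1 : u 1 = 0) :
    Real.pi ^ 2 * ∫ x in (0:ℝ)..1, (u x) ^ 2 ≤ ∫ x in (0:ℝ)..1, (deriv u x) ^ 2 := by
  have hcu : Continuous u := hu.continuous
  have hu' : Continuous (deriv u) := hu.continuous_deriv le_rfl
  have hderiv : ∀ x, HasDerivAt u (deriv u x) x :=
    fun x => (hu.differentiable one_ne_zero x).hasDerivAt
  have hnonneg := integral_sq_deriv_sub_sq_nonneg (fun x _ => hderiv x) hu'.continuousOn h0 h1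
  rw [intervalIntegral.integral_sub
    ((by fun_prop : Continuous fun x => deriv u x ^ 2).intervalIntegrable _ _)
    ((by fun_prop : Continuous fun x => π ^ 2 * u x ^ 2).intervalIntegrable _ _),
    intervalIntegral.integral_const_mul] at hnonneg
  linarith
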